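/- arXiv:1708.02028 — 2 statements merged into one kernel-verified Lean document; each statement's English description precedes it below -/
import Mathlib

section
/- Let G be a graph, M an induced matching of G, and xy ∈ M. Let N₁ be the set of vertices in (N_G(x) ∪ N_G(y)) \ {x, y} incident with an edge of PC_G(M, xy), and N₂ the set of vertices outside N_G[x] ∪ N_G[y] incident with an edge of PC_G(M, xy). Then PC_G(M, xy) equals the union of the set of edges of G with both endpoints in {x, y} ∪ N₁ and the set of edges of G with one endpoint in N₁ and the other in N₂. -/
/-! An edge lies in `PC_G(M, xy)` iff it meets `N[x] ∪ N[y]` and none of its endpoints lies in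
the closed neighbourhood of another edge of `M`. The second condition is a property of single
vertices, so `PC_G(M, xy)` consists of the edges meeting `N[x] ∪ N[y]` whose endpoints are both
covered by `PC_G(M, xy)`. As `M` is induced, `xy` itself is a private conflict edge, so `x` and `y`
are covered, `{x, y} ∪ N₁` is the covered part of `N[x] ∪ N[y]` and `N₂` the covered part outside
it. -/

open Classical

variable {V : Type*}

/-- Two edges (as `Sym2 V`) are in conflict: they are at distance at most 2
in the line graph, i.e. they share a vertex or some edge of `G` joins them. -/
def Conflict (G : SimpleGraph V) (e f : Sym2 V) : Prop :=
  ∃ a ∈ e, ∃ b ∈ f, a = b ∨ G.Adj a b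

/-- `C_G(e)`: the set of edges of `G` in conflict with `e` (including `e`). -/
def CSet (G : SimpleGraph V) (e : Sym2 V) : Set (Sym2 V) :=
  {f | f ∈ G.edgeSet ∧ Conflict G e f}

/-- `PC_G(M, e)`: the private conflict edges of `e` with respect to `M`. -/
def PCSet (G : SimpleGraph V) (M : Set (Sym2 V)) (e : Sym2 V) : Set (Sym2 V) :=
  CSet G e \ ⋃ f ∈ M \ {e}, CSet G f

/-- `M` is an induced matching of `G`. -/
def IsInducedMatching (G : SimpleGraph V) (M : Set (Sym2 V)) : Prop :=
  M ⊆ G.edgeSet ∧ ∀ e ∈ M, ∀ f ∈ M, e ≠ f → ¬ Conflict G e f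

/-- `M` is a maximal induced matching of `G`. -/
def IsMaximalInducedMatching (G : SimpleGraph V) (M : Set (Sym2 V)) : Prop :=
  IsInducedMatching G M ∧ ∀ M', IsInducedMatching G M' → M ⊆ M' → M' = M

/-- `M` is stable under the local-search exchange operation: any two distinct
private conflict edges of an edge of `M` conflict with each other. -/
def LSStable (G : SimpleGraph V) (M : Set (Sym2 V)) : Prop :=
  ∀ e ∈ M, ∀ e' ∈ PCSet G M e, ∀ e'' ∈ PCSet G M e, e' ≠ e'' → e'' ∈ CSet G e'

/-- The edges of `G` with both endpoints in `S`. -/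
def edgesWithin (G : SimpleGraph V) (S : Set V) : Set (Sym2 V) :=
  {e | e ∈ G.edgeSet ∧ ∀ a ∈ e, a ∈ S}

/-- The edges of `G` with one endpoint in `S` and the other in `T`. -/
def edgesBetween (G : SimpleGraph V) (S T : Set V) : Set (Sym2 V) :=
  {e | e ∈ G.edgeSet ∧ ∃ a b : V, e = s(a, b) ∧ a ∈ S ∧ b ∈ T}

/-- `G` has no induced cycle of length 4. -/
def C4Free (G : SimpleGraph V) : Prop :=
  ¬ ∃ a b c d : V, G.Adj a b ∧ G.Adj b c ∧ G.Adj c d ∧ G.Adj d a ∧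
      ¬ G.Adj a c ∧ ¬ G.Adj b d ∧ a ≠ c ∧ b ≠ d

/-- `G` has no induced cycle of length 5. -/
def C5Free (G : SimpleGraph V) : Prop :=
  ¬ ∃ a b c d e : V, G.Adj a b ∧ G.Adj b c ∧ G.Adj c d ∧ G.Adj d e ∧ G.Adj e a ∧
      ¬ G.Adj a c ∧ ¬ G.Adj a d ∧ ¬ G.Adj b d ∧ ¬ G.Adj b e ∧ ¬ G.Adj c e ∧
      a ≠ c ∧ a ≠ d ∧ b ≠ d ∧ b ≠ e ∧ c ≠ e

/-- `G` has no induced `K_{1,3}` (claw). -/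
def ClawFree (G : SimpleGraph V) : Prop :=
  ¬ ∃ v a b c : V, G.Adj v a ∧ G.Adj v b ∧ G.Adj v c ∧
      ¬ G.Adj a b ∧ ¬ G.Adj a c ∧ ¬ G.Adj b c ∧ a ≠ b ∧ a ≠ c ∧ b ≠ c

variable {G : SimpleGraph V}

def edgeClosedNbhd (G : SimpleGraph V) (e : Sym2 V) : Set V :=
  {v | ∃ a ∈ e, a = v ∨ G.Adj a v}

theorem mem_edgeClosedNbhd_mk {x y v : V} :
    v ∈ edgeClosedNbhd G s(x, y) ↔ v = x ∨ v = y ∨ G.Adj x v ∨ G.Adj y v := by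
  simp only [edgeClosedNbhd, Set.mem_ofPred_eq, Sym2.mem_iff, exists_eq_or_imp, exists_eq_left]
  tauto

theorem mem_edgeClosedNbhd_of_adj {e : Sym2 V} {u w : V} (hu : u ∈ e) (huw : G.Adj u w) :
    w ∈ edgeClosedNbhd G e :=
  ⟨u, hu, Or.inr huw⟩

theorem conflict_iff_exists_mem_edgeClosedNbhd {e f : Sym2 V} :
    Conflict G e f ↔ ∃ v ∈ f, v ∈ edgeClosedNbhd G e :=
  ⟨fun ⟨a, ha, b, hb, h⟩ => ⟨b, hb, a, ha, h⟩, fun ⟨b, hb, a, ha, h⟩ => ⟨a, ha, b, hb, h⟩⟩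

theorem mem_PCSet_iff {M : Set (Sym2 V)} {e₀ e : Sym2 V} :
    e ∈ PCSet G M e₀ ↔ e ∈ G.edgeSet ∧ (∃ v ∈ e, v ∈ edgeClosedNbhd G e₀) ∧
      ∀ v ∈ e, ∀ f ∈ M, f ≠ e₀ → v ∉ edgeClosedNbhd G f := by
  simp only [PCSet, CSet, Set.mem_sdiff, Set.mem_iUnion, Set.mem_ofPred_eq,
    conflict_iff_exists_mem_edgeClosedNbhd, Set.mem_singleton_iff]
  grind

theorem conflict_self (e : Sym2 V) : Conflict G e e := by
  induction e using Sym2.inductionOn with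
  | _ a b => exact ⟨a, Sym2.mem_mk_left a b, a, Sym2.mem_mk_left a b, Or.inl rfl⟩

theorem IsInducedMatching.self_mem_PCSet {M : Set (Sym2 V)} {e : Sym2 V}
    (hM : IsInducedMatching G M) (he : e ∈ M) : e ∈ PCSet G M e := by
  refine ⟨⟨hM.1 he, conflict_self e⟩, ?_⟩
  simp only [Set.mem_iUnion, not_exists]
  exact fun f ⟨hf, hfe⟩ hef => hM.2 f hf e he hfe hef.2

def pcVertices (G : SimpleGraph V) (M : Set (Sym2 V)) (e : Sym2 V) : Set V :=
  {v | ∃ f ∈ PCSet G M e, v ∈ f}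

theorem mem_PCSet_of_forall_mem_pcVertices {M : Set (Sym2 V)} {e₀ e : Sym2 V}
    (he : e ∈ G.edgeSet) (hconf : ∃ v ∈ e, v ∈ edgeClosedNbhd G e₀)
    (hpc : ∀ v ∈ e, v ∈ pcVertices G M e₀) : e ∈ PCSet G M e₀ := by
  refine mem_PCSet_iff.2 ⟨he, hconf, fun v hv => ?_⟩
  obtain ⟨f, hf, hvf⟩ := hpc v hv
  exact (mem_PCSet_iff.1 hf).2.2 v hvf

section PrivateConflictEdges

variable {M : Set (Sym2 V)} {x y : V}

theorem mem_edgesWithin_union_edgesBetween_of_mem_PCSet {u w : V}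
    (he : s(u, w) ∈ PCSet G M s(x, y)) (hu : u ∈ edgeClosedNbhd G s(x, y)) :
    s(u, w) ∈
      edgesWithin G (edgeClosedNbhd G s(x, y) ∩ pcVertices G M s(x, y)) ∪
      edgesBetween G ((edgeClosedNbhd G s(x, y) ∩ pcVertices G M s(x, y)) \ {x, y})
        (pcVertices G M s(x, y) \ edgeClosedNbhd G s(x, y)) := by
  have huw : G.Adj u w := (mem_PCSet_iff.1 he).1
  have huK : u ∈ pcVertices G M s(x, y) := ⟨_, he, Sym2.mem_mk_left u w⟩
  have hwK : w ∈ pcVertices G M s(x, y) := ⟨_, he, Sym2.mem_mk_right u w⟩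
  by_cases hw : w ∈ edgeClosedNbhd G s(x, y)
  · refine Or.inl ⟨huw, fun v hv => ?_⟩
    rcases Sym2.mem_iff.1 hv with rfl | rfl
    exacts [⟨hu, huK⟩, ⟨hw, hwK⟩]
  · refine Or.inr ⟨huw, u, w, rfl, ⟨⟨hu, huK⟩, ?_⟩, hwK, hw⟩
    -- `w` lies outside `N[x] ∪ N[y]`, so its neighbour `u` is neither `x` nor `y`
    rintro (rfl | rfl)
    exacts [hw (mem_edgeClosedNbhd_of_adj (Sym2.mem_mk_left _ _) huw),
      hw (mem_edgeClosedNbhd_of_adj (Sym2.mem_mk_right _ _) huw)]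

theorem PCSet_eq_edgesWithin_union_edgesBetween :
    PCSet G M s(x, y) =
      edgesWithin G (edgeClosedNbhd G s(x, y) ∩ pcVertices G M s(x, y)) ∪
      edgesBetween G ((edgeClosedNbhd G s(x, y) ∩ pcVertices G M s(x, y)) \ {x, y})
        (pcVertices G M s(x, y) \ edgeClosedNbhd G s(x, y)) := by
  ext e
  constructor
  · intro he
    induction e using Sym2.inductionOn with
    | _ u w =>
      obtain ⟨v, hv, hvT⟩ := (mem_PCSet_iff.1 he).2.1
      rcases Sym2.mem_iff.1 hv with rfl | rfl
      · exact mem_edgesWithin_union_edgesBetween_of_mem_PCSet he hvT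
      · rw [Sym2.eq_swap (a := u)] at he ⊢
        exact mem_edgesWithin_union_edgesBetween_of_mem_PCSet he hvT
  · rintro (⟨he, hS⟩ | ⟨he, a, b, rfl, ⟨⟨haT, haK⟩, -⟩, hbK, -⟩)
    · induction e using Sym2.inductionOn with
      | _ a b =>
        have ha := Sym2.mem_mk_left a b
        exact mem_PCSet_of_forall_mem_pcVertices he ⟨a, ha, (hS a ha).1⟩ fun v hv => (hS v hv).2
    · refine mem_PCSet_of_forall_mem_pcVertices he ⟨a, Sym2.mem_mk_left a b, haT⟩ fun v hv => ?_
      rcases Sym2.mem_iff.1 hv with rfl | rfl <;> assumption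

end PrivateConflictEdges

theorem stmt5_general (G : SimpleGraph V) (M : Set (Sym2 V))
    (hM : IsInducedMatching G M) (x y : V)
    (hmem : s(x, y) ∈ M)
    (N₁ N₂ : Set V)
    (hN₁ : N₁ = {v : V | v ∈ (G.neighborSet x ∪ G.neighborSet y) \ {x, y} ∧
      ∃ e ∈ PCSet G M s(x, y), v ∈ e})
    (hN₂ : N₂ = {v : V | v ∉ (G.neighborSet x ∪ {x}) ∪ (G.neighborSet y ∪ {y}) ∧
      ∃ e ∈ PCSet G M s(x, y), v ∈ e}) :
    PCSet G M s(x, y) = edgesWithin G ({x, y} ∪ N₁) ∪ edgesBetween G N₁ N₂ := by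
  have hx : x ∈ pcVertices G M s(x, y) := ⟨_, hM.self_mem_PCSet hmem, Sym2.mem_mk_left x y⟩
  have hy : y ∈ pcVertices G M s(x, y) := ⟨_, hM.self_mem_PCSet hmem, Sym2.mem_mk_right x y⟩
  have hN₁' : N₁ = (edgeClosedNbhd G s(x, y) ∩ pcVertices G M s(x, y)) \ {x, y} := by
    ext v
    simp only [hN₁, mem_edgeClosedNbhd_mk, pcVertices, Set.mem_ofPred_eq, Set.mem_sdiff,
      Set.mem_inter_iff, Set.mem_union, SimpleGraph.mem_neighborSet, Set.mem_insert_iff,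
      Set.mem_singleton_iff]
    tauto
  have hxyN₁ : {x, y} ∪ N₁ = edgeClosedNbhd G s(x, y) ∩ pcVertices G M s(x, y) := by
    rw [hN₁', Set.union_sdiff_self, Set.union_eq_right]
    exact Set.insert_subset ⟨mem_edgeClosedNbhd_mk.2 (Or.inl rfl), hx⟩
      (Set.singleton_subset_iff.2 ⟨mem_edgeClosedNbhd_mk.2 (Or.inr (Or.inl rfl)), hy⟩)
  have hN₂' : N₂ = pcVertices G M s(x, y) \ edgeClosedNbhd G s(x, y) := by
    ext v
    simp only [hN₂, mem_edgeClosedNbhd_mk, pcVertices, Set.mem_ofPred_eq, Set.mem_sdiff,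
      Set.mem_union, SimpleGraph.mem_neighborSet, Set.mem_singleton_iff]
    tauto
  rw [hxyN₁, hN₁', hN₂']
  exact PCSet_eq_edgesWithin_union_edgesBetween

/-- structure of the set of private conflict edges. -/
theorem stmt5 (G : SimpleGraph V) (M : Set (Sym2 V))
    (hM : IsInducedMatching G M) (x y : V) (hxy : G.Adj x y)
    (hmem : s(x, y) ∈ M)
    (N₁ N₂ : Set V)
    (hN₁ : N₁ = {v : V | v ∈ (G.neighborSet x ∪ G.neighborSet y) \ {x, y} ∧
      ∃ e ∈ PCSet G M s(x, y), v ∈ e})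
    (hN₂ : N₂ = {v : V | v ∉ (G.neighborSet x ∪ {x}) ∪ (G.neighborSet y ∪ {y}) ∧
      ∃ e ∈ PCSet G M s(x, y), v ∈ e}) :
    PCSet G M s(x, y) = edgesWithin G ({x, y} ∪ N₁) ∪ edgesBetween G N₁ N₂ :=
  stmt5_general G M hM x y hmem N₁ N₂ hN₁ hN₂
end

section
/- Let G be a claw-free (K_{1,3}-free) graph of maximum degree at most d (d ≥ 3), and let M be an induced matching of G that is maximal and stable under the local-search exchange operation. Then |M| ≥ m(G)/(d² + d − 1). -/
open Classical

variable {V : Type*}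

/-!
By maximality every edge conflicts with some edge of `M`, and an edge conflicting with only one
`e ∈ M` is private to `e`; counting each edge once per conflicting edge of `M` and once more when
it is private gives `2 m(G) ≤ ∑_{e ∈ M} (|C(e)| + |PC(e)|)`.

For `e = uv`, at most `2d - 1` edges touch `u` or `v`, and every other edge of `C(e)` meets the
set `N(uv)` of at most `2d - 2` further neighbours of `u` and `v`, each carrying at most `d - 1`
such edges. An edge of `C(e)` inside `N(uv)` is counted twice from `N(uv)`, which pays for its
privacy; an edge leaving `N(uv)` is paid for by claw-freeness: two private edges `xq₁, xq₂` from
`x ∈ N(uv)` to non-neighbours of `e` would force `q₁q₂ ∈ G`, and the edge of `M` conflicting with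
`q₁q₂` would also conflict with `xq₁` or `xq₂`. Hence `|C(e)| + |PC(e)| ≤ 2(d² + d - 1)`.
-/

open Finset

theorem Finset.two_mul_card_biUnion_le {ι α : Type*} [DecidableEq ι] [DecidableEq α]
    (s : Finset ι) (C : ι → Finset α) :
    2 * #(s.biUnion C) ≤ ∑ i ∈ s, (#(C i) + #(C i \ (s.erase i).biUnion C)) := by
  set U := s.biUnion C
  have count : ∀ t ⊆ U, #t = ∑ a ∈ U, if a ∈ t then 1 else 0 := fun t ht => by
    rw [sum_boole, Nat.cast_id, filter_mem_eq_inter, inter_eq_right.mpr ht]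
  have mult : ∀ a ∈ U, 2 ≤ ∑ i ∈ s,
      ((if a ∈ C i then 1 else 0) + if a ∈ C i \ (s.erase i).biUnion C then 1 else 0) := by
    intro a ha
    rw [sum_add_distrib, sum_boole, sum_boole, Nat.cast_id, Nat.cast_id]
    obtain ⟨i, hi, hai⟩ := mem_biUnion.mp ha
    by_cases hpriv : a ∈ C i \ (s.erase i).biUnion C
    · have h₁ : 0 < #{j ∈ s | a ∈ C j} := card_pos.mpr ⟨i, mem_filter.mpr ⟨hi, hai⟩⟩
      have h₂ : 0 < #{j ∈ s | a ∈ C j \ (s.erase j).biUnion C} :=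
        card_pos.mpr ⟨i, mem_filter.mpr ⟨hi, hpriv⟩⟩
      omega
    · rw [mem_sdiff, not_and_not_right] at hpriv
      obtain ⟨j, hj, haj⟩ := mem_biUnion.mp (hpriv hai)
      have : 1 < #{j ∈ s | a ∈ C j} := one_lt_card.mpr
        ⟨j, mem_filter.mpr ⟨mem_of_mem_erase hj, haj⟩, i, mem_filter.mpr ⟨hi, hai⟩,
          ne_of_mem_erase hj⟩
      omega
  calc 2 * #U = ∑ _a ∈ U, 2 := by rw [sum_const, smul_eq_mul, mul_comm]
    _ ≤ _ := sum_le_sum mult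
    _ = _ := sum_comm
    _ = _ := sum_congr rfl fun i hi => by
      rw [sum_add_distrib, ← count _ (subset_biUnion_of_mem C hi),
        ← count _ (sdiff_subset.trans (subset_biUnion_of_mem C hi))]

theorem Conflict.symm {G : SimpleGraph V} {e f : Sym2 V} (h : Conflict G e f) :
    Conflict G f e := by
  obtain ⟨a, ha, b, hb, hab⟩ := h
  exact ⟨b, hb, a, ha, hab.imp Eq.symm SimpleGraph.Adj.symm⟩

theorem conflict_refl (G : SimpleGraph V) (e : Sym2 V) : Conflict G e e := by
  induction e using Sym2.inductionOn with
  | hf x y => exact ⟨x, Sym2.mem_mk_left x y, x, Sym2.mem_mk_left x y, Or.inl rfl⟩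

theorem mem_pcSet {G : SimpleGraph V} {M : Set (Sym2 V)} {e g : Sym2 V} :
    g ∈ PCSet G M e ↔ g ∈ CSet G e ∧ ∀ f ∈ M, f ≠ e → g ∉ CSet G f := by
  simp [PCSet, and_imp]

theorem IsMaximalInducedMatching.exists_conflict {G : SimpleGraph V} {M : Set (Sym2 V)}
    (hM : IsMaximalInducedMatching G M) {g : Sym2 V} (hg : g ∈ G.edgeSet) :
    ∃ f ∈ M, Conflict G f g := by
  by_contra! hfree
  have hind : IsInducedMatching G (insert g M) := by
    refine ⟨Set.insert_subset hg hM.1.1, ?_⟩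
    rintro e (rfl | he) f (rfl | hf) hef
    · exact absurd rfl hef
    · exact fun h => hfree f hf h.symm
    · exact hfree e he
    · exact hM.1.2 e he f hf hef
  have hgM : g ∈ M := hM.2 _ hind (Set.subset_insert g M) ▸ Set.mem_insert g M
  exact hfree g hgM (conflict_refl G g)

theorem ClawFree.eq_of_mem_pcSet {G : SimpleGraph V} {M : Set (Sym2 V)} (hclaw : ClawFree G)
    (hM : IsMaximalInducedMatching G M) {e : Sym2 V} (he : e ∈ M) {a x q₁ q₂ : V} (ha : a ∈ e)
    (hxa : G.Adj x a) (hq₁ : s(x, q₁) ∈ PCSet G M e) (hq₂ : s(x, q₂) ∈ PCSet G M e)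
    (hfar₁ : ∀ b ∈ e, b ≠ q₁ ∧ ¬ G.Adj b q₁) (hfar₂ : ∀ b ∈ e, b ≠ q₂ ∧ ¬ G.Adj b q₂) :
    q₁ = q₂ := by
  rw [mem_pcSet] at hq₁ hq₂
  by_contra hne
  have hq₁q₂ : G.Adj q₁ q₂ := by
    by_contra hna
    exact hclaw ⟨x, a, q₁, q₂, hxa, hq₁.1.1, hq₂.1.1, (hfar₁ a ha).2, (hfar₂ a ha).2, hna,
      (hfar₁ a ha).1, (hfar₂ a ha).1, hne⟩
  obtain ⟨f, hf, b, hb, q, hq, hbq⟩ := hM.exists_conflict (G.mem_edgeSet.mpr hq₁q₂)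
  have hfe : f ≠ e := by
    rintro rfl
    rcases Sym2.mem_iff.mp hq with rfl | rfl
    · exact hbq.elim (hfar₁ b hb).1 (hfar₁ b hb).2
    · exact hbq.elim (hfar₂ b hb).1 (hfar₂ b hb).2
  have hconf : Conflict G f s(x, q) := ⟨b, hb, q, Sym2.mem_mk_right x q, hbq⟩
  rcases Sym2.mem_iff.mp hq with rfl | rfl
  · exact hq₁.2 f hf hfe ⟨hq₁.1.1, hconf⟩
  · exact hq₂.2 f hf hfe ⟨hq₂.1.1, hconf⟩

theorem card_add_card_inter_sym2_le_sum {S : Finset V} {T : Finset (Sym2 V)}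
    (hdiag : ∀ g ∈ T, ¬ g.IsDiag) (hmeet : ∀ g ∈ T, ∃ x ∈ S, x ∈ g) :
    #T + #(T ∩ S.sym2) ≤ ∑ x ∈ S, #{g ∈ T | x ∈ g} := by
  have hends : ∀ g ∈ T, 1 + (if g ∈ S.sym2 then 1 else 0) ≤ #{x ∈ S | x ∈ g} := by
    intro g hg
    split_ifs with hin
    · rw [mem_sym2_iff] at hin
      induction g using Sym2.inductionOn with
      | hf a b =>
        have hab : a ≠ b := fun h => hdiag _ hg (Sym2.mk_isDiag_iff.mpr h)
        exact one_lt_card.mpr ⟨a, mem_filter.mpr ⟨hin a (Sym2.mem_mk_left a b),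
          Sym2.mem_mk_left a b⟩, b, mem_filter.mpr ⟨hin b (Sym2.mem_mk_right a b),
          Sym2.mem_mk_right a b⟩, hab⟩
    · obtain ⟨x, hx, hxg⟩ := hmeet g hg
      exact card_pos.mpr ⟨x, mem_filter.mpr ⟨hx, hxg⟩⟩
  calc #T + #(T ∩ S.sym2)
      = ∑ g ∈ T, (1 + if g ∈ S.sym2 then 1 else 0) := by
        rw [sum_add_distrib, sum_boole, Nat.cast_id, card_eq_sum_ones, filter_mem_eq_inter]
    _ ≤ ∑ g ∈ T, #{x ∈ S | x ∈ g} := sum_le_sum hends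
    _ = ∑ x ∈ S, #{g ∈ T | x ∈ g} :=
        (sum_card_bipartiteAbove_eq_sum_card_bipartiteBelow (fun x g => x ∈ g)).symm

section LocalBound

open SimpleGraph

variable [Fintype V] {G : SimpleGraph V} {M : Set (Sym2 V)} {d : ℕ} {u v : V}

theorem SimpleGraph.ncard_neighborSet_eq_degree (G : SimpleGraph V) (w : V) :
    (G.neighborSet w).ncard = G.degree w := by
  rw [Set.ncard_eq_toFinset_card', ← G.neighborFinset_def, G.card_neighborFinset_eq_degree]

noncomputable def edgeNeighborFinset (G : SimpleGraph V) (u v : V) : Finset V :=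
  (G.neighborFinset u ∪ G.neighborFinset v) \ {u, v}

noncomputable def distTwoEdgeFinset (G : SimpleGraph V) (u v : V) : Finset (Sym2 V) :=
  {g ∈ G.edgeFinset | u ∉ g ∧ v ∉ g ∧ ∃ x ∈ edgeNeighborFinset G u v, x ∈ g}

theorem mem_edgeNeighborFinset {x : V} :
    x ∈ edgeNeighborFinset G u v ↔ (G.Adj u x ∨ G.Adj v x) ∧ x ≠ u ∧ x ≠ v := by
  simp [edgeNeighborFinset, and_comm]

theorem card_edgeNeighborFinset_add_two_le (hΔ : ∀ w, G.degree w ≤ d) (huv : G.Adj u v) :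
    #(edgeNeighborFinset G u v) + 2 ≤ 2 * d := by
  have hsub : {u, v} ⊆ G.neighborFinset u ∪ G.neighborFinset v := by
    simp [insert_subset_iff, huv, huv.symm]
  have hunion := card_union_le (G.neighborFinset u) (G.neighborFinset v)
  have hpair := card_le_card hsub
  rw [card_pair huv.ne] at hpair
  rw [edgeNeighborFinset, card_sdiff_of_subset hsub, card_pair huv.ne]
  have hu := hΔ u
  have hv := hΔ v
  rw [← G.card_neighborFinset_eq_degree] at hu hv
  omega

theorem card_incidenceFinset_union_add_one_le (hΔ : ∀ w, G.degree w ≤ d) (huv : G.Adj u v) :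
    #(G.incidenceFinset u ∪ G.incidenceFinset v) + 1 ≤ 2 * d := by
  have hshared : s(u, v) ∈ G.incidenceFinset u ∩ G.incidenceFinset v := by
    simp [mem_incidenceFinset, incidenceSet, huv]
  have := card_union_add_card_inter (G.incidenceFinset u) (G.incidenceFinset v)
  have := card_pos.mpr ⟨_, hshared⟩
  have hu := hΔ u
  have hv := hΔ v
  rw [← G.card_incidenceFinset_eq_degree] at hu hv
  omega

theorem mem_incidenceFinset_union_or_mem_distTwoEdgeFinset {g : Sym2 V}
    (hg : g ∈ CSet G s(u, v)) :
    g ∈ G.incidenceFinset u ∪ G.incidenceFinset v ∨ g ∈ distTwoEdgeFinset G u v := by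
  obtain ⟨hgE, a, ha, x, hx, hax⟩ := hg
  by_cases huv : u ∈ g ∨ v ∈ g
  · left
    simpa [mem_incidenceFinset, incidenceSet, hgE] using huv
  · right
    rw [not_or] at huv
    have hxu : x ≠ u := by rintro rfl; exact huv.1 hx
    have hxv : x ≠ v := by rintro rfl; exact huv.2 hx
    have hadj : G.Adj u x ∨ G.Adj v x := by
      rcases Sym2.mem_iff.mp ha with rfl | rfl <;> rcases hax with rfl | h <;> tauto
    simp only [distTwoEdgeFinset, mem_filter, mem_edgeFinset]
    exact ⟨hgE, huv.1, huv.2, x, mem_edgeNeighborFinset.mpr ⟨hadj, hxu, hxv⟩, hx⟩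

theorem card_filter_mem_distTwoEdgeFinset_add_one_le (hΔ : ∀ w, G.degree w ≤ d) {x : V}
    (hx : x ∈ edgeNeighborFinset G u v) :
    #{g ∈ distTwoEdgeFinset G u v | x ∈ g} + 1 ≤ d := by
  obtain ⟨hadj, hxu, hxv⟩ := mem_edgeNeighborFinset.mp hx
  obtain ⟨a, ha, hxa⟩ : ∃ a, (a = u ∨ a = v) ∧ G.Adj x a := by
    rcases hadj with h | h
    · exact ⟨u, Or.inl rfl, h.symm⟩
    · exact ⟨v, Or.inr rfl, h.symm⟩
  have hsub : {g ∈ distTwoEdgeFinset G u v | x ∈ g} ⊂ G.incidenceFinset x := by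
    refine ssubset_iff_of_subset (fun g hg => ?_) |>.mpr ⟨s(x, a), ?_, ?_⟩
    · simp only [distTwoEdgeFinset, mem_filter, mem_edgeFinset] at hg
      simp [mem_incidenceFinset, incidenceSet, hg.1.1, hg.2]
    · simpa [mem_incidenceFinset] using hxa
    · simp only [distTwoEdgeFinset, mem_filter, not_and]
      rcases ha with rfl | rfl <;> simp
  have := hΔ x
  rw [← G.card_incidenceFinset_eq_degree] at this
  have := card_lt_card hsub
  omega

theorem eq_of_mem_distTwoEdgeFinset_of_mem_pcSet (hclaw : ClawFree G)
    (hM : IsMaximalInducedMatching G M) (he : s(u, v) ∈ M) {x : V}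
    (hx : x ∈ edgeNeighborFinset G u v) {g₁ g₂ : Sym2 V}
    (hg₁ : g₁ ∈ distTwoEdgeFinset G u v ∧ g₁ ∈ PCSet G M s(u, v) ∧
      g₁ ∉ (edgeNeighborFinset G u v).sym2 ∧ x ∈ g₁)
    (hg₂ : g₂ ∈ distTwoEdgeFinset G u v ∧ g₂ ∈ PCSet G M s(u, v) ∧
      g₂ ∉ (edgeNeighborFinset G u v).sym2 ∧ x ∈ g₂) :
    g₁ = g₂ := by
  have far : ∀ q, s(x, q) ∈ distTwoEdgeFinset G u v →
      s(x, q) ∉ (edgeNeighborFinset G u v).sym2 → ∀ b ∈ s(u, v), b ≠ q ∧ ¬ G.Adj b q := by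
    intro q hq hout
    simp only [distTwoEdgeFinset, mem_filter, Sym2.mem_iff, not_or] at hq
    obtain ⟨-, ⟨-, huq⟩, ⟨-, hvq⟩, -⟩ := hq
    have hqS : q ∉ edgeNeighborFinset G u v := by
      simpa [hx] using hout
    rw [mem_edgeNeighborFinset] at hqS
    intro b hb
    rcases Sym2.mem_iff.mp hb with rfl | rfl
    · exact ⟨huq, fun h => hqS ⟨Or.inl h, Ne.symm huq, Ne.symm hvq⟩⟩
    · exact ⟨hvq, fun h => hqS ⟨Or.inr h, Ne.symm huq, Ne.symm hvq⟩⟩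
  obtain ⟨a, ha, hxa⟩ : ∃ a ∈ s(u, v), G.Adj x a := by
    rcases (mem_edgeNeighborFinset.mp hx).1 with h | h
    · exact ⟨u, Sym2.mem_mk_left u v, h.symm⟩
    · exact ⟨v, Sym2.mem_mk_right u v, h.symm⟩
  obtain ⟨q₁, rfl⟩ := Sym2.mem_iff_exists.mp hg₁.2.2.2
  obtain ⟨q₂, rfl⟩ := Sym2.mem_iff_exists.mp hg₂.2.2.2
  rw [hclaw.eq_of_mem_pcSet hM he ha hxa hg₁.2.1 hg₂.2.1 (far q₁ hg₁.1 hg₁.2.2.1)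
    (far q₂ hg₂.1 hg₂.2.2.1)]

theorem card_distTwoEdgeFinset_add_card_filter_pcSet_le (hΔ : ∀ w, G.degree w ≤ d)
    (hclaw : ClawFree G) (hM : IsMaximalInducedMatching G M) (he : s(u, v) ∈ M) :
    #(distTwoEdgeFinset G u v) + #{g ∈ distTwoEdgeFinset G u v | g ∈ PCSet G M s(u, v)} ≤
      #(edgeNeighborFinset G u v) * d := by
  set S := edgeNeighborFinset G u v
  set T := distTwoEdgeFinset G u v
  set Q := {g ∈ T | g ∈ PCSet G M s(u, v) ∧ g ∉ S.sym2}
  have hdiag : ∀ g ∈ T, ¬ g.IsDiag := fun g hg =>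
    G.not_isDiag_of_mem_edgeSet (mem_edgeFinset.mp (mem_filter.mp hg).1)
  have hmeet : ∀ g ∈ T, ∃ x ∈ S, x ∈ g := fun g hg => (mem_filter.mp hg).2.2.2
  have hprivate : #{g ∈ T | g ∈ PCSet G M s(u, v)} ≤ #(T ∩ S.sym2) + #Q := by
    refine (card_le_card fun g hg => ?_).trans (card_union_le _ _)
    rw [mem_filter] at hg
    by_cases hin : g ∈ S.sym2
    · exact mem_union_left _ (mem_inter.mpr ⟨hg.1, hin⟩)
    · exact mem_union_right _ (mem_filter.mpr ⟨hg.1, hg.2, hin⟩)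
  have hT := card_add_card_inter_sym2_le_sum hdiag hmeet
  have hQ := card_add_card_inter_sym2_le_sum (S := S) (T := Q)
    (fun g hg => hdiag g (filter_subset _ _ hg)) (fun g hg => hmeet g (filter_subset _ _ hg))
  have hvertex : ∀ x ∈ S, #{g ∈ T | x ∈ g} + #{g ∈ Q | x ∈ g} ≤ d := by
    intro x hx
    have hTx : #{g ∈ T | x ∈ g} + 1 ≤ d := card_filter_mem_distTwoEdgeFinset_add_one_le hΔ hx
    have hQx : #{g ∈ Q | x ∈ g} ≤ 1 := card_le_one.mpr fun g₁ h₁ g₂ h₂ => by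
      simp only [Q, mem_filter] at h₁ h₂
      exact eq_of_mem_distTwoEdgeFinset_of_mem_pcSet hclaw hM he hx
        ⟨h₁.1.1, h₁.1.2.1, h₁.1.2.2, h₁.2⟩ ⟨h₂.1.1, h₂.1.2.1, h₂.1.2.2, h₂.2⟩
    omega
  have hsum := sum_le_card_nsmul S _ d hvertex
  rw [sum_add_distrib, smul_eq_mul] at hsum
  omega

theorem card_cSet_add_card_pcSet_add_two_le (hΔ : ∀ w, G.degree w ≤ d) (hclaw : ClawFree G)
    (hM : IsMaximalInducedMatching G M) (he : s(u, v) ∈ M) :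
    #(CSet G s(u, v)).toFinset + #(PCSet G M s(u, v)).toFinset + 2 ≤ 2 * (d ^ 2 + d) := by
  have huv : G.Adj u v := hM.1.1 he
  set A := G.incidenceFinset u ∪ G.incidenceFinset v
  set T := distTwoEdgeFinset G u v
  have hC : (CSet G s(u, v)).toFinset ⊆ A ∪ T := fun g hg => by
    rcases mem_incidenceFinset_union_or_mem_distTwoEdgeFinset (Set.mem_toFinset.mp hg) with h | h
    · exact mem_union_left _ h
    · exact mem_union_right _ h
  have hP : (PCSet G M s(u, v)).toFinset ⊆ A ∪ {g ∈ T | g ∈ PCSet G M s(u, v)} := fun g hg => by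
    rw [Set.mem_toFinset] at hg
    rcases mem_incidenceFinset_union_or_mem_distTwoEdgeFinset (mem_pcSet.mp hg).1 with h | h
    · exact mem_union_left _ h
    · exact mem_union_right _ (mem_filter.mpr ⟨h, hg⟩)
  have hCcard := (card_le_card hC).trans (card_union_le _ _)
  have hPcard := (card_le_card hP).trans (card_union_le _ _)
  have hA := card_incidenceFinset_union_add_one_le hΔ huv
  have hS := card_edgeNeighborFinset_add_two_le hΔ huv
  have hT := card_distTwoEdgeFinset_add_card_filter_pcSet_le hΔ hclaw hM he
  have hSd := Nat.mul_le_mul_right d hS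
  nlinarith

theorem IsMaximalInducedMatching.ncard_edgeSet_add_ncard_le (hM : IsMaximalInducedMatching G M)
    (hΔ : ∀ w, G.degree w ≤ d) (hclaw : ClawFree G) :
    G.edgeSet.ncard + M.ncard ≤ M.ncard * (d ^ 2 + d) := by
  set C : Sym2 V → Finset (Sym2 V) := fun e => (CSet G e).toFinset
  have hE : G.edgeFinset = M.toFinset.biUnion C := by
    ext g
    simp only [mem_edgeFinset, mem_biUnion, Set.mem_toFinset, C]
    exact ⟨fun hg => (hM.exists_conflict hg).imp fun f hf => ⟨hf.1, hg, hf.2⟩,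
      fun ⟨_, _, hg, _⟩ => hg⟩
  have hP : ∀ e, (PCSet G M e).toFinset = C e \ (M.toFinset.erase e).biUnion C := fun e => by
    ext g
    simp only [Set.mem_toFinset, mem_pcSet, mem_sdiff, mem_biUnion, mem_erase, C]
    grind
  have hlocal : ∀ e ∈ M.toFinset,
      #(C e) + #(C e \ (M.toFinset.erase e).biUnion C) + 2 ≤ 2 * (d ^ 2 + d) := by
    intro e he
    rw [← hP]
    induction e using Sym2.inductionOn with
    | hf u v => exact card_cSet_add_card_pcSet_add_two_le hΔ hclaw hM (Set.mem_toFinset.mp he)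
  have hcount := two_mul_card_biUnion_le M.toFinset C
  have hsum := sum_le_card_nsmul _ _ _ hlocal
  rw [sum_add_distrib, sum_const, smul_eq_mul, smul_eq_mul] at hsum
  rw [← G.coe_edgeFinset, Set.ncard_coe_finset, ← Set.coe_toFinset M, Set.ncard_coe_finset, hE]
  nlinarith

end LocalBound

theorem stmt11_general [Fintype V] (G : SimpleGraph V) (d : ℕ)
    (hΔ : ∀ v : V, (G.neighborSet v).ncard ≤ d) (hclaw : ClawFree G)
    (M : Set (Sym2 V)) (hmax : IsMaximalInducedMatching G M) :
    (M.ncard : ℝ) ≥ (G.edgeSet.ncard : ℝ) / ((d : ℝ) ^ 2 + (d : ℝ) - 1) := by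
  have hcount : (G.edgeSet.ncard : ℝ) ≤ M.ncard * ((d : ℝ) ^ 2 + d - 1) := by
    have hnat :=
      hmax.ncard_edgeSet_add_ncard_le (fun w => G.ncard_neighborSet_eq_degree w ▸ hΔ w) hclaw
    have hreal : (G.edgeSet.ncard : ℝ) + M.ncard ≤ M.ncard * ((d : ℝ) ^ 2 + d) := by
      exact_mod_cast hnat
    linarith
  rcases Nat.eq_zero_or_pos d with rfl | hd
  · exact (div_nonpos_of_nonneg_of_nonpos (Nat.cast_nonneg _) (by norm_num)).trans
      (Nat.cast_nonneg _)
  · have hd : (1 : ℝ) ≤ d := by exact_mod_cast hd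
    rw [ge_iff_le, div_le_iff₀ (by nlinarith)]
    exact hcount

/-- lower bound for locally optimal induced matchings in claw-free graphs. -/
theorem stmt11 [Fintype V] (G : SimpleGraph V) (d : ℕ) (hd : 3 ≤ d)
    (hΔ : ∀ v : V, (G.neighborSet v).ncard ≤ d) (hclaw : ClawFree G)
    (M : Set (Sym2 V)) (hmax : IsMaximalInducedMatching G M) (hstab : LSStable G M) :
    (M.ncard : ℝ) ≥ (G.edgeSet.ncard : ℝ) / ((d : ℝ) ^ 2 + (d : ℝ) - 1) :=
  stmt11_general G d hΔ hclaw M hmax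
end
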